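/- arXiv:2005.08272 — 4 statements merged into one kernel-verified Lean document; each statement's English description precedes it below -/
import Mathlib

section
/- For the symmetric bilinear map Θ = Θ_{A,B,C,D,E} on ℂ³, the Ricci tensor Ricci(Y,Z) := tr(X ↦ R(X,Y)Z) satisfies: Ricci(e₁,e₂) = Ricci(e₂,e₁) = (C²+D²)/4; Ricci(e₃,e₁) = Ricci(e₁,e₃) = CE/2; Ricci(e₃,e₂) = Ricci(e₂,e₃) = DE/2; Ricci(e₁,e₁) = (C²+2CD−D²)/4; Ricci(e₂,e₂) = (D²+2CD−C²)/4; Ricci(e₃,e₃) = E²/2 + (A+B)(C+D)/2. -/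
noncomputable section

/-- `ℂ³`. -/
abbrev V3 : Type := Fin 3 → ℂ

/-- The standard basis of `ℂ³`: `e 0 = e₁ = ∂/∂z₁`, `e 1 = e₂ = ∂/∂z₂`, `e 2 = e₃ = ∂/∂τ`. -/
def e (i : Fin 3) : V3 := Pi.single i 1

/-- The curvature tensor `R(X,Y)Z = Θ(X,Θ(Y,Z)) − Θ(Y,Θ(X,Z))`. -/
def curv (Θ : V3 →ₗ[ℂ] V3 →ₗ[ℂ] V3) (X Y Z : V3) : V3 :=
  Θ X (Θ Y Z) - Θ Y (Θ X Z)

/-- `TrR(X,Y) = tr (Z ↦ R(X,Y)Z)`. -/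
def trR (Θ : V3 →ₗ[ℂ] V3 →ₗ[ℂ] V3) (X Y : V3) : ℂ :=
  LinearMap.trace ℂ V3 ((Θ X) ∘ₗ (Θ Y) - (Θ Y) ∘ₗ (Θ X))

/-- `Ricci(Y,Z) = tr (X ↦ R(X,Y)Z)`. -/
def ricci (Θ : V3 →ₗ[ℂ] V3 →ₗ[ℂ] V3) (Y Z : V3) : ℂ :=
  LinearMap.trace ℂ V3 (Θ.flip (Θ Y Z) - (Θ Y) ∘ₗ (Θ.flip Z))

/-- The projective Weyl tensor in dimension three. -/
def weyl (Θ : V3 →ₗ[ℂ] V3 →ₗ[ℂ] V3) (X Y Z : V3) : V3 :=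
  curv Θ X Y Z - ((1/4 : ℂ) * trR Θ X Y) • Z
    - (1/2 : ℂ) • (ricci Θ Y Z • X - ricci Θ X Z • Y)
    - (1/8 : ℂ) • (trR Θ Y Z • X - trR Θ X Z • Y)

theorem LinearMap.trace_eq_sum_apply_single {R ι : Type*} [CommRing R] [Fintype ι]
    [DecidableEq ι] (f : (ι → R) →ₗ[R] ι → R) :
    LinearMap.trace R (ι → R) f = ∑ i, f (Pi.single i 1) i := by
  conv_lhs => rw [← Matrix.toLin'_toMatrix' f, Matrix.trace_toLin'_eq]
  rfl

theorem apply_eq_sum_smul_apply_e {M : Type*} [AddCommGroup M] [Module ℂ M] (f : V3 →ₗ[ℂ] M)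
    (v : V3) : f v = ∑ l, v l • f (e l) := by
  conv_lhs => rw [← Finset.univ_sum_single v]
  simp only [map_sum, e, ← map_smul, ← Pi.single_smul', smul_eq_mul, mul_one]

-- `Θ (e i) (e j) l` is the Christoffel symbol `Γˡᵢⱼ`, so this is `Ricⱼₖ = Γˡⱼₖ Γⁱᵢₗ - Γˡᵢₖ Γⁱⱼₗ`.
theorem ricci_e_e_eq_sum (Θ : V3 →ₗ[ℂ] V3 →ₗ[ℂ] V3) (j k : Fin 3) :
    ricci Θ (e j) (e k) = ∑ i, ∑ l,
      (Θ (e j) (e k) l * Θ (e i) (e l) i - Θ (e i) (e k) l * Θ (e j) (e l) i) := by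
  rw [ricci, LinearMap.trace_eq_sum_apply_single]
  refine Finset.sum_congr rfl fun i _ => ?_
  rw [LinearMap.sub_apply, LinearMap.flip_apply, LinearMap.comp_apply, LinearMap.flip_apply,
    ← e, apply_eq_sum_smul_apply_e (Θ (e i)) (Θ (e j) (e k)),
    apply_eq_sum_smul_apply_e (Θ (e j)) (Θ (e i) (e k)),
    Pi.sub_apply, Finset.sum_apply, Finset.sum_apply, ← Finset.sum_sub_distrib]
  simp only [Pi.smul_apply, smul_eq_mul]

/-- The Ricci tensor of `Θ_{A,B,C,D,E}` on `ℂ³` (`e₁ = e 0`, `e₂ = e 1`, `e₃ = e 2`). -/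
theorem stmt_6 (A B C D E : ℂ)
    (Θ : V3 →ₗ[ℂ] V3 →ₗ[ℂ] V3)
    (hsymm : ∀ x y : V3, Θ x y = Θ y x)
    (h11 : Θ (e 0) (e 0) = C • e 0)
    (h22 : Θ (e 1) (e 1) = D • e 1)
    (h33 : Θ (e 2) (e 2) = A • e 0 + B • e 1 + E • e 2)
    (h12 : Θ (e 0) (e 1) = (C/2) • e 0 + (D/2) • e 1)
    (h13 : Θ (e 0) (e 2) = (E/2) • e 0 + (C/2) • e 2)
    (h23 : Θ (e 1) (e 2) = (E/2) • e 1 + (D/2) • e 2)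
    :
    ricci Θ (e 0) (e 1) = (C^2 + D^2)/4 ∧
    ricci Θ (e 1) (e 0) = (C^2 + D^2)/4 ∧
    ricci Θ (e 2) (e 0) = C*E/2 ∧
    ricci Θ (e 0) (e 2) = C*E/2 ∧
    ricci Θ (e 2) (e 1) = D*E/2 ∧
    ricci Θ (e 1) (e 2) = D*E/2 ∧
    ricci Θ (e 0) (e 0) = (C^2 + 2*C*D - D^2)/4 ∧
    ricci Θ (e 1) (e 1) = (D^2 + 2*C*D - C^2)/4 ∧
    ricci Θ (e 2) (e 2) = E^2/2 + (A+B)*(C+D)/2 := by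
  have h21 := (hsymm (e 1) (e 0)).trans h12
  have h31 := (hsymm (e 2) (e 0)).trans h13
  have h32 := (hsymm (e 2) (e 1)).trans h23
  simp only [ricci_e_e_eq_sum, Fin.sum_univ_three, h11, h22, h33, h12, h13, h23, h21, h31, h32]
  simp only [e, Pi.add_apply, Pi.smul_apply, Pi.single_apply, smul_eq_mul, Fin.reduceEq,
    ↓reduceIte]
  refine ⟨?_, ?_, ?_, ?_, ?_, ?_, ?_, ?_, ?_⟩ <;> ring
end
end

section
/- The projective Weyl tensor of Θ_{A,B,C,D,E} does not depend on the parameter E: for all A,B,C,D,E ∈ ℂ and all X,Y,Z ∈ ℂ³, the Weyl tensor of Θ_{A,B,C,D,E} evaluated at (X,Y,Z) equals the Weyl tensor of Θ_{A,B,C,D,0} evaluated at (X,Y,Z). -/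
/-!
With `β = (E/2)·e₃*` one has `Θ_{A,B,C,D,E}(X,Y) = Θ_{A,B,C,D,0}(X,Y) + β(X)Y + β(Y)X`,
so the two are projectively equivalent. Under such a change of a symmetric `Θ` the curvature
moves by `P(Y,Z)X − P(X,Z)Y` with `P(Y,Z) = β(Θ(Y,Z)) + β(Y)β(Z)` symmetric: `TrR` is
unchanged, `Ricci` gains `(n − 1)P = 2P`, and in `W` these corrections cancel exactly.
-/

noncomputable section

section ProjectiveChange

open LinearMap

variable {K V : Type*} [CommRing K] [AddCommGroup V] [Module K V]

def projChange (β : V →ₗ[K] K) : V →ₗ[K] V →ₗ[K] V :=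
  β.smulRight LinearMap.id + (β.smulRight LinearMap.id).flip

@[simp]
lemma projChange_apply (β : V →ₗ[K] K) (X Y : V) :
    projChange β X Y = β X • Y + β Y • X := rfl

def schoutenShift (Θ : V →ₗ[K] V →ₗ[K] V) (β : V →ₗ[K] K) :
    V →ₗ[K] V →ₗ[K] K :=
  Θ.compr₂ β + β.smulRight β

@[simp]
lemma schoutenShift_apply (Θ : V →ₗ[K] V →ₗ[K] V) (β : V →ₗ[K] K) (X Y : V) :
    schoutenShift Θ β X Y = β (Θ X Y) + β X * β Y := rfl

variable {Θ : V →ₗ[K] V →ₗ[K] V} (hΘ : ∀ X Y, Θ X Y = Θ Y X) (β : V →ₗ[K] K)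
include hΘ

lemma schoutenShift_comm (X Y : V) : schoutenShift Θ β X Y = schoutenShift Θ β Y X := by
  simp only [schoutenShift_apply, hΘ X Y, mul_comm]

lemma curvature_add_projChange (X Y Z : V) :
    (Θ + projChange β) X ((Θ + projChange β) Y Z)
        - (Θ + projChange β) Y ((Θ + projChange β) X Z)
      = Θ X (Θ Y Z) - Θ Y (Θ X Z)
        + schoutenShift Θ β Y Z • X - schoutenShift Θ β X Z • Y := by
  simp only [LinearMap.add_apply, projChange_apply, schoutenShift_apply, map_add, map_smul, hΘ Y X]
  module

lemma curvatureOp_add_projChange (X Y : V) :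
    (Θ + projChange β) X ∘ₗ (Θ + projChange β) Y
        - (Θ + projChange β) Y ∘ₗ (Θ + projChange β) X
      = Θ X ∘ₗ Θ Y - Θ Y ∘ₗ Θ X + (schoutenShift Θ β Y).smulRight X
        - (schoutenShift Θ β X).smulRight Y := by
  ext Z
  exact curvature_add_projChange hΘ β X Y Z

lemma ricciOp_add_projChange (Y Z : V) :
    (Θ + projChange β).flip ((Θ + projChange β) Y Z)
        - (Θ + projChange β) Y ∘ₗ (Θ + projChange β).flip Z
      = Θ.flip (Θ Y Z) - Θ Y ∘ₗ Θ.flip Z + schoutenShift Θ β Y Z • LinearMap.id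
        - ((schoutenShift Θ β).flip Z).smulRight Y := by
  ext X
  exact curvature_add_projChange hΘ β X Y Z

variable [Module.Free K V] [Module.Finite K V]

lemma trace_curvatureOp_add_projChange (X Y : V) :
    trace K V ((Θ + projChange β) X ∘ₗ (Θ + projChange β) Y
        - (Θ + projChange β) Y ∘ₗ (Θ + projChange β) X)
      = trace K V (Θ X ∘ₗ Θ Y - Θ Y ∘ₗ Θ X) := by
  rw [curvatureOp_add_projChange hΘ, map_sub, map_add, trace_smulRight, trace_smulRight,
    schoutenShift_comm hΘ, add_sub_cancel_right]

lemma trace_ricciOp_add_projChange (Y Z : V) :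
    trace K V ((Θ + projChange β).flip ((Θ + projChange β) Y Z)
        - (Θ + projChange β) Y ∘ₗ (Θ + projChange β).flip Z)
      = trace K V (Θ.flip (Θ Y Z) - Θ Y ∘ₗ Θ.flip Z)
        + (Module.finrank K V - 1) * schoutenShift Θ β Y Z := by
  rw [ricciOp_add_projChange hΘ, map_sub, map_add, map_smul, trace_id, trace_smulRight,
    flip_apply]
  ring

end ProjectiveChange

lemma LinearMap.ext_basis_of_comm {K ι V W : Type*} [CommSemiring K] [LinearOrder ι]
    [AddCommMonoid V] [Module K V] [AddCommMonoid W] [Module K W]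
    (b : Module.Basis ι K V) {Θ Φ : V →ₗ[K] V →ₗ[K] W}
    (hΘ : ∀ X Y, Θ X Y = Θ Y X) (hΦ : ∀ X Y, Φ X Y = Φ Y X)
    (h : ∀ i j, i ≤ j → Θ (b i) (b j) = Φ (b i) (b j)) : Θ = Φ :=
  LinearMap.ext_basis b b fun i j =>
    (le_total i j).elim (h i j) fun hji => by rw [hΘ, hΦ, h j i hji]

lemma weyl_add_projChange {Θ : V3 →ₗ[ℂ] V3 →ₗ[ℂ] V3} (hΘ : ∀ X Y, Θ X Y = Θ Y X)
    (β : V3 →ₗ[ℂ] ℂ) (X Y Z : V3) : weyl (Θ + projChange β) X Y Z = weyl Θ X Y Z := by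
  have hdim : (Module.finrank ℂ V3 : ℂ) - 1 = 2 := by norm_num
  simp only [weyl, curv, trR, ricci, curvature_add_projChange hΘ,
    trace_curvatureOp_add_projChange hΘ, trace_ricciOp_add_projChange hΘ, hdim]
  module

/-- The projective Weyl tensor of `Θ_{A,B,C,D,E}` does not depend on the parameter `E`:
it coincides with the Weyl tensor of `Θ_{A,B,C,D,0}`. -/
theorem stmt_7 (A B C D E : ℂ)
    (Θ : V3 →ₗ[ℂ] V3 →ₗ[ℂ] V3)
    (hsymm : ∀ x y : V3, Θ x y = Θ y x)
    (h11 : Θ (e 0) (e 0) = C • e 0)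
    (h22 : Θ (e 1) (e 1) = D • e 1)
    (h33 : Θ (e 2) (e 2) = A • e 0 + B • e 1 + E • e 2)
    (h12 : Θ (e 0) (e 1) = (C/2) • e 0 + (D/2) • e 1)
    (h13 : Θ (e 0) (e 2) = (E/2) • e 0 + (C/2) • e 2)
    (h23 : Θ (e 1) (e 2) = (E/2) • e 1 + (D/2) • e 2)
    (Θ' : V3 →ₗ[ℂ] V3 →ₗ[ℂ] V3)
    (hsymm' : ∀ x y : V3, Θ' x y = Θ' y x)
    (h11' : Θ' (e 0) (e 0) = C • e 0)
    (h22' : Θ' (e 1) (e 1) = D • e 1)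
    (h33' : Θ' (e 2) (e 2) = A • e 0 + B • e 1)
    (h12' : Θ' (e 0) (e 1) = (C/2) • e 0 + (D/2) • e 1)
    (h13' : Θ' (e 0) (e 2) = (C/2) • e 2)
    (h23' : Θ' (e 1) (e 2) = (D/2) • e 2) :
    ∀ X Y Z : V3, weyl Θ X Y Z = weyl Θ' X Y Z := by
  set β : V3 →ₗ[ℂ] ℂ := (E / 2) • LinearMap.proj 2
  have hβ0 : β (e 0) = 0 := by simp [β, e]
  have hβ1 : β (e 1) = 0 := by simp [β, e]
  have hβ2 : β (e 2) = E / 2 := by simp [β, e]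
  have hΘ : Θ = Θ' + projChange β := by
    refine LinearMap.ext_basis_of_comm (Pi.basisFun ℂ (Fin 3)) hsymm
      (fun X Y => by simp only [LinearMap.add_apply, projChange_apply, hsymm' X Y, add_comm]) ?_
    intro i j hij
    have hb : ∀ i, Pi.basisFun ℂ (Fin 3) i = e i := fun i => Pi.basisFun_apply ℂ (Fin 3) i
    simp only [hb, LinearMap.add_apply, projChange_apply]
    fin_cases i <;> fin_cases j <;>
      simp only [Fin.reduceFinMk, Fin.isValue, Fin.reduceLE] at hij ⊢
    all_goals
      simp only [h11, h22, h33, h12, h13, h23, h11', h22', h33', h12', h13', h23', hβ0, hβ1, hβ2]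
      module
  intro X Y Z
  rw [hΘ, weyl_add_projChange hsymm']
end
end

section
/- The projective Weyl tensor W of Θ_{A,B,C,D,E} on ℂ³ vanishes identically if and only if C = D. (In particular, for C ≠ D the translation-invariant holomorphic affine connection ∇^{A,B,C,D,E} on a complex 3-torus is not projectively flat, so the generic translation-invariant holomorphic affine connection on a complex 3-torus is not projectively flat.) -/
noncomputable section

/-!
If `C = D`, then `Θ(x, y) = ½ (α(x) y + α(y) x) + x₃ y₃ (A e₁ + B e₂)` with
`α = C (dz₁ + dz₂) + E dτ`. The first summand is a projective change of connection, and the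
second is flat because its values lie in the kernel of `dτ`; the projectively invariant Weyl
tensor therefore vanishes. Conversely, the `e₁`-component of `W(e₁, e₂) e₁` is `-(C - D)² / 8`.
-/

theorem LinearMap.trace_pi_eq_sum {R ι : Type*} [CommRing R] [Fintype ι] [DecidableEq ι]
    (f : (ι → R) →ₗ[R] ι → R) : LinearMap.trace R _ f = ∑ i, f (Pi.single i 1) i := by
  simp [LinearMap.trace_eq_matrix_trace R (Pi.basisFun R ι), Matrix.trace]

lemma trace_eq_sum_e (f : V3 →ₗ[ℂ] V3) :
    LinearMap.trace ℂ V3 f = f (e 0) 0 + f (e 1) 1 + f (e 2) 2 := by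
  simp [LinearMap.trace_pi_eq_sum, Fin.sum_univ_three, e]

/-- `Θ_{A,B,C,D,E}` written out in coordinates. -/
def theta (A B C D E : ℂ) : V3 →ₗ[ℂ] V3 →ₗ[ℂ] V3 :=
  LinearMap.mk₂ ℂ (fun x y => ![
    C * x 0 * y 0 + C / 2 * (x 0 * y 1 + x 1 * y 0) + E / 2 * (x 0 * y 2 + x 2 * y 0) + A * x 2 * y 2,
    D * x 1 * y 1 + D / 2 * (x 0 * y 1 + x 1 * y 0) + E / 2 * (x 1 * y 2 + x 2 * y 1) + B * x 2 * y 2,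
    E * x 2 * y 2 + C / 2 * (x 0 * y 2 + x 2 * y 0) + D / 2 * (x 1 * y 2 + x 2 * y 1)])
    (by intros; ext i; fin_cases i <;> simp <;> ring)
    (by intros; ext i; fin_cases i <;> simp <;> ring)
    (by intros; ext i; fin_cases i <;> simp <;> ring)
    (by intros; ext i; fin_cases i <;> simp <;> ring)

section theta

variable (A B C D E : ℂ) (x y : V3)

@[simp] lemma theta_apply_zero : theta A B C D E x y 0 =
    C * x 0 * y 0 + C / 2 * (x 0 * y 1 + x 1 * y 0) + E / 2 * (x 0 * y 2 + x 2 * y 0) + A * x 2 * y 2 :=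
  rfl

@[simp] lemma theta_apply_one : theta A B C D E x y 1 =
    D * x 1 * y 1 + D / 2 * (x 0 * y 1 + x 1 * y 0) + E / 2 * (x 1 * y 2 + x 2 * y 1) + B * x 2 * y 2 :=
  rfl

@[simp] lemma theta_apply_two : theta A B C D E x y 2 =
    E * x 2 * y 2 + C / 2 * (x 0 * y 2 + x 2 * y 0) + D / 2 * (x 1 * y 2 + x 2 * y 1) :=
  rfl

lemma eq_theta {Θ : V3 →ₗ[ℂ] V3 →ₗ[ℂ] V3} (hsymm : ∀ x y : V3, Θ x y = Θ y x)
    (h11 : Θ (e 0) (e 0) = C • e 0) (h22 : Θ (e 1) (e 1) = D • e 1)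
    (h33 : Θ (e 2) (e 2) = A • e 0 + B • e 1 + E • e 2)
    (h12 : Θ (e 0) (e 1) = (C/2) • e 0 + (D/2) • e 1)
    (h13 : Θ (e 0) (e 2) = (E/2) • e 0 + (C/2) • e 2)
    (h23 : Θ (e 1) (e 2) = (E/2) • e 1 + (D/2) • e 2) :
    Θ = theta A B C D E := by
  refine LinearMap.ext_basis (Pi.basisFun ℂ (Fin 3)) (Pi.basisFun ℂ (Fin 3)) fun i j => ?_
  simp only [Pi.basisFun_apply, ← e.eq_def]
  have h21 := (hsymm (e 1) (e 0)).trans h12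
  have h31 := (hsymm (e 2) (e 0)).trans h13
  have h32 := (hsymm (e 2) (e 1)).trans h23
  fin_cases i <;> fin_cases j <;> simp [h11, h22, h33, h12, h13, h23, h21, h31, h32] <;>
    ext k <;> fin_cases k <;> simp [e]

lemma weyl_theta_e0_e1_e0 :
    weyl (theta A B C D E) (e 0) (e 1) (e 0) 0 = -(C - D) ^ 2 / 8 := by
  simp [weyl, curv, trR, ricci, trace_eq_sum_e, e]
  ring

lemma weyl_theta_of_eq (X Y Z : V3) : weyl (theta A B C C E) X Y Z = 0 := by
  ext k
  fin_cases k <;> simp [weyl, curv, trR, ricci, trace_eq_sum_e, e] <;> ring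

end theta

/-- The projective Weyl tensor of `Θ_{A,B,C,D,E}` on `ℂ³` vanishes identically
if and only if `C = D`. -/
theorem stmt_9 (A B C D E : ℂ)
    (Θ : V3 →ₗ[ℂ] V3 →ₗ[ℂ] V3)
    (hsymm : ∀ x y : V3, Θ x y = Θ y x)
    (h11 : Θ (e 0) (e 0) = C • e 0)
    (h22 : Θ (e 1) (e 1) = D • e 1)
    (h33 : Θ (e 2) (e 2) = A • e 0 + B • e 1 + E • e 2)
    (h12 : Θ (e 0) (e 1) = (C/2) • e 0 + (D/2) • e 1)
    (h13 : Θ (e 0) (e 2) = (E/2) • e 0 + (C/2) • e 2)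
    (h23 : Θ (e 1) (e 2) = (E/2) • e 1 + (D/2) • e 2)
    :
    (∀ X Y Z : V3, weyl Θ X Y Z = 0) ↔ C = D := by
  obtain rfl := eq_theta A B C D E hsymm h11 h22 h33 h12 h13 h23
  constructor
  · intro h
    have h0 : weyl (theta A B C D E) (e 0) (e 1) (e 0) 0 = 0 := congrFun (h _ _ _) 0
    rw [weyl_theta_e0_e1_e0] at h0
    have hsq : (C - D) ^ 2 = 0 := by linear_combination -8 * h0
    exact sub_eq_zero.mp (pow_eq_zero_iff two_ne_zero |>.mp hsq)
  · rintro rfl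
    exact weyl_theta_of_eq A B C E
end
end

section
/- Let A, B : ℂ → ℂ be differentiable functions. For a point p = (τ, z₁, z₂) ∈ ℂ³, let Θ(p) : ℂ³×ℂ³ → ℂ³ be the symmetric bilinear map with Θ(p)(e_τ, e_τ) = A(τ)·e₁ + B(τ)·e₂ and Θ(p)(u,v) = 0 whenever u or v lies in the span of {e₁, e₂}, where e_τ, e₁, e₂ are the coordinate directions of τ, z₁, z₂. Then the curvature of the connection ∇₀ + Θ, namely R(p)(X,Y)Z := (∂_X q ↦ Θ(q)(Y,Z))(p) − (∂_Y q ↦ Θ(q)(X,Z))(p) + Θ(p)(X, Θ(p)(Y,Z)) − Θ(p)(Y, Θ(p)(X,Z)) (where ∂_X denotes the directional derivative at p in direction X of the indicated ℂ³-valued map), vanishes identically: R(p)(X,Y)Z = 0 for all p ∈ ℂ³ and all X,Y,Z ∈ ℂ³. (This is the flatness of the affine connections ∇^{A,B} representing holomorphic projective connections on Kuga–Shimura projective threefolds.) -/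
/-!
Both axioms of `Θ` say that `Θ p u v = (u τ * v τ) • V(τ)` with `V = A • e₁ + B • e₂`. Since `V`
takes values in `span {e₁, e₂}`, every quadratic term `Θ(X, Θ(Y, Z))` vanishes, and the two
derivative terms both equal `(X τ * Y τ * Z τ) • V'(τ)`, so they cancel.
-/

open Submodule

namespace LinearMap

variable {R M P : Type*} [CommRing R] [AddCommGroup M] [Module R M] [AddCommGroup P] [Module R P]
  {S : Submodule R M} {φ : M → R} {e : M}

theorem apply_apply_eq_smul_of_vanishing (β : M →ₗ[R] M →ₗ[R] P) (hφ : ∀ x, x - φ x • e ∈ S)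
    (hβ : ∀ u v, u ∈ S ∨ v ∈ S → β u v = 0) (x y : M) :
    β x y = (φ x * φ y) • β e e := by
  have hx : β (x - φ x • e) y = 0 := hβ _ _ (.inl (hφ x))
  have hy : β e (y - φ y • e) = 0 := hβ _ _ (.inr (hφ y))
  simp only [map_sub, map_smul, sub_apply, smul_apply, sub_eq_zero] at hx hy
  rw [hx, hy, smul_smul]

theorem apply_apply_apply_eq_zero_of_vanishing (β : M →ₗ[R] M →ₗ[R] M) (hφ : ∀ x, x - φ x • e ∈ S)
    (hβ : ∀ u v, u ∈ S ∨ v ∈ S → β u v = 0) (hee : β e e ∈ S) (x y z : M) :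
    β x (β y z) = 0 :=
  hβ _ _ <| .inr <| by
    rw [apply_apply_eq_smul_of_vanishing β hφ hβ]
    exact S.smul_mem _ hee

end LinearMap

namespace Fin

variable {R : Type*} [CommRing R]

theorem smul_single_one_add_smul_single_two_mem_span (a b : R) :
    a • Pi.single 1 1 + b • Pi.single 2 1 ∈
      span R {(Pi.single 1 1 : Fin 3 → R), Pi.single 2 1} :=
  add_mem (smul_mem _ _ (subset_span (by simp))) (smul_mem _ _ (subset_span (by simp)))

theorem sub_smul_single_zero_mem_span (x : Fin 3 → R) :
    x - x 0 • Pi.single 0 1 ∈ span R {(Pi.single 1 1 : Fin 3 → R), Pi.single 2 1} := by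
  have hx : x - x 0 • Pi.single 0 1 = x 1 • Pi.single 1 1 + x 2 • Pi.single 2 1 := by
    funext i; fin_cases i <;> simp
  rw [hx]
  exact smul_single_one_add_smul_single_two_mem_span _ _

end Fin

theorem fderiv_const_smul_comp_apply {𝕜 F ι : Type*} [NontriviallyNormedField 𝕜]
    [NormedAddCommGroup F] [NormedSpace 𝕜 F] [Fintype ι] {V : 𝕜 → F} (c : 𝕜) (i : ι)
    {p : ι → 𝕜} (hV : DifferentiableAt 𝕜 V (p i)) (X : ι → 𝕜) :
    fderiv 𝕜 (fun q => c • V (q i)) p X = (c * X i) • deriv V (p i) := by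
  have hcV : HasFDerivAt (fun q => c • V (q i))
      (c • ((1 : 𝕜 →L[𝕜] 𝕜).smulRight (deriv V (p i))).comp (ContinuousLinearMap.proj i)) p :=
    (hV.hasDerivAt.hasFDerivAt.comp p (hasFDerivAt_apply i p)).const_smul c
  simp [hcV.fderiv, smul_smul]

/-- Coordinates on `ℂ³`: index `0` is `τ`, index `1` is `z₁`, index `2` is `z₂`;
`eτ = Pi.single 0 1`, `e₁ = Pi.single 1 1`, `e₂ = Pi.single 2 1`.
Let `A, B : ℂ → ℂ` be differentiable and let `Θ(p)` be the symmetric bilinear map with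
`Θ(p)(eτ,eτ) = A(τ)•e₁ + B(τ)•e₂` and `Θ(p)(u,v) = 0` whenever `u` or `v` lies in
`span{e₁,e₂}`. Then the curvature of `∇₀ + Θ`,
`R(p)(X,Y)Z = ∂_X(Θ(·)(Y,Z))(p) − ∂_Y(Θ(·)(X,Z))(p) + Θ(p)(X,Θ(p)(Y,Z)) − Θ(p)(Y,Θ(p)(X,Z))`,
vanishes identically. -/
theorem stmt_14 (A B : ℂ → ℂ) (hA : Differentiable ℂ A) (hB : Differentiable ℂ B)
    (Θ : (Fin 3 → ℂ) → ((Fin 3 → ℂ) →ₗ[ℂ] (Fin 3 → ℂ) →ₗ[ℂ] (Fin 3 → ℂ)))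
    (hττ : ∀ p : Fin 3 → ℂ,
      Θ p (Pi.single 0 1) (Pi.single 0 1)
        = A (p 0) • (Pi.single 1 1 : Fin 3 → ℂ) + B (p 0) • (Pi.single 2 1 : Fin 3 → ℂ))
    (hzero : ∀ (p u v : Fin 3 → ℂ),
      (u ∈ Submodule.span ℂ {(Pi.single 1 1 : Fin 3 → ℂ), (Pi.single 2 1 : Fin 3 → ℂ)} ∨
       v ∈ Submodule.span ℂ {(Pi.single 1 1 : Fin 3 → ℂ), (Pi.single 2 1 : Fin 3 → ℂ)}) →
      Θ p u v = 0) :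
    ∀ (p X Y Z : Fin 3 → ℂ),
      fderiv ℂ (fun q => Θ q Y Z) p X - fderiv ℂ (fun q => Θ q X Z) p Y
        + Θ p X (Θ p Y Z) - Θ p Y (Θ p X Z) = 0 := by
  intro p X Y Z
  set V : ℂ → Fin 3 → ℂ := fun τ => A τ • Pi.single 1 1 + B τ • Pi.single 2 1
  have hV : Differentiable ℂ V := (hA.smul_const _).add (hB.smul_const _)
  have hΘ (q u v : Fin 3 → ℂ) : Θ q u v = (u 0 * v 0) • V (q 0) := by
    rw [(Θ q).apply_apply_eq_smul_of_vanishing Fin.sub_smul_single_zero_mem_span (hzero q), hττ]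
  have hquad (u v w : Fin 3 → ℂ) : Θ p u (Θ p v w) = 0 :=
    (Θ p).apply_apply_apply_eq_zero_of_vanishing Fin.sub_smul_single_zero_mem_span (hzero p)
      (hττ p ▸ Fin.smul_single_one_add_smul_single_two_mem_span _ _) u v w
  have hderiv (u v w : Fin 3 → ℂ) :
      fderiv ℂ (fun q => Θ q u v) p w = (u 0 * v 0 * w 0) • deriv V (p 0) := by
    simp_rw [hΘ]
    exact fderiv_const_smul_comp_apply _ 0 (hV _) w
  rw [hderiv, hderiv, hquad, hquad]
  ring_nf
end
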